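/- arXiv:2108.04566 — 7 statements merged into one kernel-verified Lean document; each statement's English description precedes it below -/
import Mathlib

section
/- Let G be a connected weighted graph and let (A, V∖A) be a cut of G. If a clustering C of V has the property that each cluster is entirely contained in A or entirely contained in V∖A, and the contracted quotient graph G_C has more than one vertex, then λ(G_C) = λ(G), where G_C is obtained by contracting each cluster to a single vertex. -/
open Finset

variable {V : Type*} [Fintype V] [DecidableEq V]

/-- Weight of the cut `(A, V ∖ A)`: total weight of edges from `A` to its complement. -/
def cutWeight (c : V → V → ℕ) (A : Finset V) : ℕ :=
  ∑ u ∈ A, ∑ v ∈ Aᶜ, c u v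

/-- `A` induces a cut: it is a nonempty proper subset of the vertices. -/
def IsCut (A : Finset V) : Prop := A.Nonempty ∧ A ≠ Finset.univ

/-- `A` is a (global) minimum cut of the graph with weights `c`. -/
def IsMinCut (c : V → V → ℕ) (A : Finset V) : Prop :=
  IsCut A ∧ ∀ B : Finset V, IsCut B → cutWeight c A ≤ cutWeight c B

/-- The global minimum cut value λ(G). -/
noncomputable def minCutVal (c : V → V → ℕ) : ℕ :=
  sInf (cutWeight c '' {A : Finset V | IsCut A})

/-- Cuts of the contracted graph `G/(u,v)` correspond exactly to the cuts of `G`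
that do not separate `u` and `v`; the weights agree. -/
def IsCutNS (u v : V) (A : Finset V) : Prop := IsCut A ∧ (u ∈ A ↔ v ∈ A)

/-- The minimum cut value λ(G/(u,v)) of the graph obtained by contracting the edge `(u,v)`. -/
noncomputable def minCutValC (c : V → V → ℕ) (u v : V) : ℕ :=
  sInf (cutWeight c '' {A : Finset V | IsCutNS u v A})

lemma pull_cutWeight {W : Type*} [Fintype W] [DecidableEq W]
    (c : V → V → ℕ) (π : V → W) (B : Finset W) :
    cutWeight (fun b₁ b₂ : W => if b₁ = b₂ then 0 else
        ∑ u ∈ Finset.univ.filter (fun u : V => π u = b₁),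
          ∑ v ∈ Finset.univ.filter (fun v : V => π v = b₂), c u v) B
      = cutWeight c (Finset.univ.filter (fun u => π u ∈ B)) := by
  unfold cutWeight
  have hc : (Finset.univ.filter (fun u => π u ∈ B))ᶜ
      = Finset.univ.filter (fun u => π u ∈ Bᶜ) := by
    ext u; simp
  rw [hc]
  calc ∑ b₁ ∈ B, ∑ b₂ ∈ Bᶜ, (if b₁ = b₂ then 0 else
        ∑ u ∈ Finset.univ.filter (fun u : V => π u = b₁),
          ∑ v ∈ Finset.univ.filter (fun v : V => π v = b₂), c u v)
      = ∑ b₁ ∈ B, ∑ b₂ ∈ Bᶜ,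
        ∑ u ∈ Finset.univ.filter (fun u : V => π u = b₁),
          ∑ v ∈ Finset.univ.filter (fun v : V => π v = b₂), c u v := by
        refine sum_congr rfl fun b₁ h₁ => sum_congr rfl fun b₂ h₂ => ?_
        rw [if_neg]; rintro rfl; exact (mem_compl.mp h₂) h₁
    _ = ∑ b₁ ∈ B, ∑ u ∈ Finset.univ.filter (fun u : V => π u = b₁),
          ∑ v ∈ Finset.univ.filter (fun v => π v ∈ Bᶜ), c u v := by
        refine sum_congr rfl fun b₁ _ => ?_
        rw [sum_comm]
        refine sum_congr rfl fun u _ => ?_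
        exact sum_fiberwise_eq_sum_filter Finset.univ Bᶜ π (fun v => c u v)
    _ = _ := sum_fiberwise_eq_sum_filter Finset.univ B π _

lemma pull_isCut {W : Type*} [Fintype W] [DecidableEq W]
    (π : V → W) (hsurj : Function.Surjective π) (B : Finset W) (hB : IsCut B) :
    IsCut (Finset.univ.filter (fun u => π u ∈ B)) := by
  obtain ⟨⟨b, hb⟩, hne⟩ := hB
  constructor
  · obtain ⟨u, rfl⟩ := hsurj b
    exact ⟨u, by simpa using hb⟩
  · intro h
    obtain ⟨b', hb'⟩ : ∃ b', b' ∉ B := by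
      by_contra hcon; push_neg at hcon
      exact hne (Finset.eq_univ_of_forall hcon)
    obtain ⟨u, rfl⟩ := hsurj b'
    rw [Finset.eq_univ_iff_forall] at h
    exact hb' (Finset.mem_filter.mp (h u)).2

/-- Let `G` be connected (every cut has positive weight) and let `π : V → W` be a
clustering of the vertices into blocks (`W` the set of blocks, `π` surjective, quotient
with more than one vertex).  If some minimum cut `(A, V∖A)` of `G` has every cluster
entirely inside `A` or inside `V∖A`, then the contracted quotient graph `G_C` (block
weights given by total inter-block weight) satisfies λ(G_C) = λ(G). -/
theorem stmt3 {W : Type*} [Fintype W] [DecidableEq W]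
    (c : V → V → ℕ) (hsym : ∀ a b : V, c a b = c b a)
    (π : V → W) (hsurj : Function.Surjective π)
    (hconn : ∀ A : Finset V, IsCut A → 0 < cutWeight c A)
    (hA : ∃ A : Finset V, IsMinCut c A ∧ ∀ u v : V, π u = π v → (u ∈ A ↔ v ∈ A))
    (hquot : 1 < Fintype.card W) :
    minCutVal (fun b₁ b₂ : W => if b₁ = b₂ then 0 else
        ∑ u ∈ Finset.univ.filter (fun u : V => π u = b₁),
          ∑ v ∈ Finset.univ.filter (fun v : V => π v = b₂), c u v)
      = minCutVal c := by
  obtain ⟨A, hmin, hresp⟩ := hA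
  set cW := (fun b₁ b₂ : W => if b₁ = b₂ then 0 else
        ∑ u ∈ Finset.univ.filter (fun u : V => π u = b₁),
          ∑ v ∈ Finset.univ.filter (fun v : V => π v = b₂), c u v) with hcW
  have hpullA : Finset.univ.filter (fun u => π u ∈ A.image π) = A := by
    ext u
    simp only [Finset.mem_filter, Finset.mem_univ, true_and, Finset.mem_image]
    constructor
    · rintro ⟨a, ha, hpa⟩; exact (hresp a u hpa).mp ha
    · intro hu; exact ⟨u, hu, rfl⟩
  have hAWcut : IsCut (A.image π) := by
    constructor
    · exact hmin.1.1.image π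
    · intro h
      apply hmin.1.2
      rw [← hpullA, h]
      simp
  have hval : minCutVal c = cutWeight c A := by
    apply le_antisymm
    · exact Nat.sInf_le ⟨A, hmin.1, rfl⟩
    · refine le_csInf ⟨_, ⟨A, hmin.1, rfl⟩⟩ ?_
      rintro x ⟨B, hB, rfl⟩
      exact hmin.2 B hB
  rw [hval]
  apply le_antisymm
  · apply Nat.sInf_le
    refine ⟨A.image π, hAWcut, ?_⟩
    rw [pull_cutWeight c π (A.image π), hpullA]
  · refine le_csInf ⟨_, ⟨A.image π, hAWcut, rfl⟩⟩ ?_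
    rintro x ⟨B, hB, rfl⟩
    rw [pull_cutWeight c π B]
    exact hmin.2 _ (pull_isCut π hsurj B hB)
end

section
/- If an edge e = (u,v) has local connectivity λ(G,u,v) strictly greater than an upper bound λ̂ ≥ λ(G) on the global minimum cut, then no minimum cut of G separates u and v, and hence every minimum cut of G survives contraction of e. -/
open Finset

variable {V : Type*} [Fintype V] [DecidableEq V]

/-- The minimum weight of a cut separating `u` from `v` (the local edge
connectivity λ(G,u,v)). -/
noncomputable def localConn (c : V → V → ℕ) (u v : V) : ℕ :=
  sInf (cutWeight c '' {A : Finset V | u ∈ A ∧ v ∉ A})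

lemma cutWeight_compl (c : V → V → ℕ) (hsym : ∀ a b : V, c a b = c b a) (A : Finset V) :
    cutWeight c Aᶜ = cutWeight c A := by
  unfold cutWeight
  rw [compl_compl, Finset.sum_comm]
  exact Finset.sum_congr rfl fun a _ => Finset.sum_congr rfl fun b _ => hsym b a

/-- If λ(G,u,v) is strictly larger than an upper bound `λ̂ ≥ λ(G)` on the global
minimum cut, then no minimum cut separates `u` and `v`, hence every minimum cut of
`G` survives contraction of `(u,v)` (it is a minimum cut of `G/(u,v)`). -/
theorem stmt6 (c : V → V → ℕ) (hsym : ∀ a b : V, c a b = c b a)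
    (u v : V) (huv : u ≠ v) (he : 0 < c u v)
    (lamHat : ℕ) (h1 : minCutVal c ≤ lamHat) (h2 : lamHat < localConn c u v) :
    (∀ A : Finset V, IsMinCut c A → (u ∈ A ↔ v ∈ A)) ∧
    (∀ A : Finset V, IsMinCut c A →
      IsCutNS u v A ∧ ∀ B : Finset V, IsCutNS u v B → cutWeight c A ≤ cutWeight c B) := by
  -- the set of cuts is nonempty
  have hcut_u : IsCut ({u} : Finset V) := by
    refine ⟨Finset.singleton_nonempty u, fun h => ?_⟩
    have : v ∈ ({u} : Finset V) := h ▸ Finset.mem_univ v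
    exact huv (Finset.mem_singleton.mp this).symm
  have key : ∀ A : Finset V, IsMinCut c A → (u ∈ A ↔ v ∈ A) := by
    intro A ⟨hA, hmin⟩
    have hAle : cutWeight c A ≤ lamHat := by
      have hne : (cutWeight c '' {A : Finset V | IsCut A}).Nonempty :=
        ⟨cutWeight c {u}, {u}, hcut_u, rfl⟩
      obtain ⟨B, hB, hBeq⟩ := Nat.sInf_mem hne
      calc cutWeight c A ≤ cutWeight c B := hmin B hB
        _ = minCutVal c := hBeq
        _ ≤ lamHat := h1
    by_contra hsep
    have hlc : localConn c u v ≤ cutWeight c A := by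
      rcases Classical.em (u ∈ A) with hu | hu
      · have hv : v ∉ A := fun hv => hsep ⟨fun _ => hv, fun _ => hu⟩
        exact Nat.sInf_le ⟨A, ⟨hu, hv⟩, rfl⟩
      · have hv : v ∈ A := by
          by_contra hv; exact hsep ⟨fun h => absurd h hu, fun h => absurd h hv⟩
        have : localConn c u v ≤ cutWeight c Aᶜ :=
          Nat.sInf_le ⟨Aᶜ, ⟨Finset.mem_compl.mpr hu, by simp [hv]⟩, rfl⟩
        rwa [cutWeight_compl c hsym] at this
    exact absurd (lt_of_le_of_lt (hlc.trans hAle) h2) (lt_irrefl _)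
  refine ⟨key, fun A hA => ⟨⟨hA.1, key A hA⟩, fun B hB => hA.2 B hB.1⟩⟩
end

section
/- Let φ be an articulation point of a connected graph G whose removal disconnects G into components G₁,…,G_p, and let G_i be a component containing no terminal vertices. Then no edge inside G_i and no edge connecting G_i to φ belongs to any minimum multiterminal cut of G; such a cut exists that assigns all vertices of G_i to the block of φ. -/
open Finset

variable {V : Type*} [Fintype V] [DecidableEq V]

/-- `P` assigns every vertex to (the block of) a terminal in `T`, with each terminal
assigned to itself.  This encodes a partition of `V` into `|T|` blocks, each
containing exactly one terminal. -/
def IsTermAssign (T : Finset V) (P : V → V) : Prop :=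
  (∀ x : V, P x ∈ T) ∧ ∀ t ∈ T, P t = t

/-- The weight of the multiterminal cut induced by the assignment `P`: the total
weight of edges whose endpoints lie in different blocks (each edge counted once). -/
def mtcWeight (c : V → V → ℕ) (P : V → V) : ℕ :=
  (∑ u : V, ∑ v : V, if P u ≠ P v then c u v else 0) / 2

/-- `P` induces a minimum multiterminal cut for the terminal set `T`. -/
def IsMinMTC (c : V → V → ℕ) (T : Finset V) (P : V → V) : Prop :=
  IsTermAssign T P ∧ ∀ Q : V → V, IsTermAssign T Q → mtcWeight c P ≤ mtcWeight c Q

/-- The minimum multiterminal cut weight W(G). -/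
noncomputable def mtcVal (c : V → V → ℕ) (T : Finset V) : ℕ :=
  sInf (mtcWeight c '' {P : V → V | IsTermAssign T P})

set_option linter.unusedSectionVars false in
lemma aux_pointwise (c : V → V → ℕ) (φ : V) (S : Finset V)
    (hsym : ∀ a b : V, c a b = c b a)
    (hiso : ∀ a ∈ S, ∀ b : V, b ∉ S → b ≠ φ → c a b = 0)
    (Q : V → V) (u v : V) :
    (if (if u ∈ S then Q φ else Q u) ≠ (if v ∈ S then Q φ else Q v) then c u v else 0)
      ≤ (if Q u ≠ Q v then c u v else 0) := by
  by_cases hu : u ∈ S <;> by_cases hv : v ∈ S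
  · simp [hu, hv]
  · by_cases hvφ : v = φ
    · subst hvφ; simp [hu, hv]
    · have : c u v = 0 := hiso u hu v hv hvφ
      simp [this]
  · by_cases huφ : u = φ
    · subst huφ; simp [hu, hv]
    · have : c u v = 0 := by rw [hsym]; exact hiso v hv u hu huφ
      simp [this]
  · simp [hu, hv]

lemma aux_assign (T : Finset V) (φ : V) (S : Finset V)
    (hTS : ∀ t ∈ T, t ∉ S) (Q : V → V) (hQ : IsTermAssign T Q) :
    IsTermAssign T (fun x => if x ∈ S then Q φ else Q x) := by
  refine ⟨fun x => ?_, fun t ht => ?_⟩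
  · by_cases h : x ∈ S <;> simp [h, hQ.1]
  · simp [hTS t ht, hQ.2 t ht]

/-- Let `φ` be an articulation point of the connected graph `G` and `S` a connected
component of `G − φ` containing no terminal (all edges leaving `S` go to `φ`).  Then
no edge inside `S` and no edge connecting `S` to `φ` belongs to any minimum
multiterminal cut, and some minimum multiterminal cut assigns all vertices of `S` to
the block of `φ`. -/
theorem stmt9 (c : V → V → ℕ) (hsym : ∀ a b : V, c a b = c b a)
    (T : Finset V) (hT : T.Nonempty)
    (φ : V) (S : Finset V) (hφS : φ ∉ S) (hS : S.Nonempty)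
    (hTS : ∀ t ∈ T, t ∉ S)
    (hiso : ∀ a ∈ S, ∀ b : V, b ∉ S → b ≠ φ → c a b = 0)
    (hconn : ∀ A : Finset V, IsCut A → 0 < cutWeight c A) :
    (∀ P : V → V, IsMinMTC c T P →
      ∀ a ∈ S, ∀ b : V, (b ∈ S ∨ b = φ) → 0 < c a b → P a = P b) ∧
    (∃ P : V → V, IsMinMTC c T P ∧ ∀ x ∈ S, P x = P φ) := by
  classical
  -- numerator of mtcWeight
  set f : (V → V) → ℕ := fun Q => ∑ u : V, ∑ v : V, if Q u ≠ Q v then c u v else 0 with hf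
  have hmtc : ∀ Q : V → V, mtcWeight c Q = f Q / 2 := fun Q => rfl
  have hfle : ∀ Q : V → V, f (fun x => if x ∈ S then Q φ else Q x) ≤ f Q := by
    intro Q
    refine Finset.sum_le_sum fun u _ => Finset.sum_le_sum fun v _ => ?_
    exact aux_pointwise c φ S hsym hiso Q u v
  constructor
  · intro P hP a ha b hb hcab
    by_contra hne
    set P' : V → V := fun x => if x ∈ S then P φ else P x with hP'
    have hab : a ≠ b := by rintro rfl; exact hne rfl
    have hP'a : P' a = P φ := by simp [hP', ha]
    have hP'b : P' b = P φ := by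
      rcases hb with hb | rfl
      · simp [hP', hb]
      · simp [hP', hφS]
    -- pair sums
    set G : V × V → ℕ := fun p => if P p.1 ≠ P p.2 then c p.1 p.2 else 0 with hG
    set G' : V × V → ℕ := fun p => if P' p.1 ≠ P' p.2 then c p.1 p.2 else 0 with hG'
    set s : Finset (V × V) := Finset.univ ×ˢ Finset.univ with hs
    have hfP : f P = ∑ p ∈ s, G p := by rw [hf, hs, Finset.sum_product]
    have hfP' : f P' = ∑ p ∈ s, G' p := by rw [hf, hs, Finset.sum_product]
    have hmem1 : (a, b) ∈ s := by simp [hs]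
    have hmem2 : (b, a) ∈ s.erase (a, b) := by
      simp [hs, Prod.ext_iff, hab, Ne.symm hab]
    set t : Finset (V × V) := (s.erase (a, b)).erase (b, a) with ht
    have hsplit : ∀ H : V × V → ℕ,
        ∑ p ∈ s, H p = H (a, b) + (H (b, a) + ∑ p ∈ t, H p) := by
      intro H
      rw [← Finset.add_sum_erase _ H hmem1, ← Finset.add_sum_erase _ H hmem2]
    have hGab : G (a, b) = c a b := by simp [hG, hne]
    have hGba : G (b, a) = c b a := by simp [hG, Ne.symm hne]
    have hG'ab : G' (a, b) = 0 := by simp [hG', hP'a, hP'b]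
    have hG'ba : G' (b, a) = 0 := by simp [hG', hP'a, hP'b]
    have htle : ∑ p ∈ t, G' p ≤ ∑ p ∈ t, G p :=
      Finset.sum_le_sum fun p _ => aux_pointwise c φ S hsym hiso P p.1 p.2
    have hcba : 0 < c b a := by rw [hsym]; exact hcab
    have hnum : f P' + 2 ≤ f P := by
      rw [hfP, hfP', hsplit G, hsplit G', hGab, hGba, hG'ab, hG'ba]
      omega
    have hlt : mtcWeight c P' < mtcWeight c P := by
      rw [hmtc, hmtc]; omega
    have hP'assign : IsTermAssign T P' := aux_assign T φ S hTS P hP.1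
    exact absurd (hP.2 P' hP'assign) (not_le.mpr hlt)
  · -- existence
    have himg : (mtcWeight c '' {P : V → V | IsTermAssign T P}).Nonempty := by
      obtain ⟨t0, ht0⟩ := hT
      refine ⟨_, ⟨fun x => if x ∈ T then x else t0, ⟨fun x => ?_, fun t ht => by simp [ht]⟩, rfl⟩⟩
      by_cases h : x ∈ T <;> simp [h, ht0]
    obtain ⟨Q, hQ, hQval⟩ := Nat.sInf_mem himg
    have hQmin : ∀ R : V → V, IsTermAssign T R → mtcWeight c Q ≤ mtcWeight c R := by
      intro R hR
      rw [hQval]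
      exact Nat.sInf_le ⟨R, hR, rfl⟩
    refine ⟨fun x => if x ∈ S then Q φ else Q x, ⟨aux_assign T φ S hTS Q hQ, ?_⟩, ?_⟩
    · intro R hR
      calc mtcWeight c (fun x => if x ∈ S then Q φ else Q x)
          ≤ mtcWeight c Q := by rw [hmtc, hmtc]; exact Nat.div_le_div_right (hfle Q)
        _ ≤ mtcWeight c R := hQmin R hR
    · intro x hx
      simp [hx, hφS]
end

section
/- Let v₁ and v₂ be two vertices of a weighted graph G such that N(v₁)∖{v₂} = N(v₂)∖{v₁} and c(v₁,u) = c(v₂,u) for every u in this common neighborhood. Then for every partition of V into blocks there exists a partition of no greater cut weight in which v₁ and v₂ are in the same block; in particular, some minimum multiterminal cut places v₁ and v₂ in the same block (assuming neither is a terminal). -/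
open Finset

variable {V : Type*} [Fintype V] [DecidableEq V]

/-- If `v₁` and `v₂` have the same neighborhood (apart from possibly each other)
with identical edge weights, then any assignment can be replaced by one of no larger
multiterminal cut weight placing `v₁` and `v₂` in the same block; in particular some
minimum multiterminal cut places them in the same block. -/
theorem stmt10 (c : V → V → ℕ) (hsym : ∀ a b : V, c a b = c b a)
    (hdiag : ∀ a : V, c a a = 0)
    (T : Finset V) (hT : T.Nonempty)
    (v1 v2 : V) (h12 : v1 ≠ v2) (hv1 : v1 ∉ T) (hv2 : v2 ∉ T)
    (hnbr : ∀ u : V, u ≠ v1 → u ≠ v2 → c v1 u = c v2 u) :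
    (∀ P : V → V, IsTermAssign T P →
      ∃ Q : V → V, IsTermAssign T Q ∧ Q v1 = Q v2 ∧ mtcWeight c Q ≤ mtcWeight c P) ∧
    (∃ P : V → V, IsMinMTC c T P ∧ P v1 = P v2) := by
  classical
  set σ := Equiv.swap v1 v2 with hσdef
  have hσ1 : σ v1 = v2 := Equiv.swap_apply_left v1 v2
  have hσ2 : σ v2 = v1 := Equiv.swap_apply_right v1 v2
  have hσo : ∀ u : V, u ≠ v1 → u ≠ v2 → σ u = u := fun u h1 h2 =>
    Equiv.swap_apply_of_ne_of_ne h1 h2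
  have hc : ∀ u v : V, c (σ u) (σ v) = c u v := by
    intro u v
    by_cases hu1 : u = v1
    · subst hu1
      by_cases hv1' : v = u
      · subst hv1'; rw [hdiag, hdiag]
      by_cases hv2' : v = v2
      · subst hv2'; rw [hσ1, hσ2, hsym]
      · rw [hσ1, hσo v hv1' hv2']
        exact (hnbr v hv1' hv2').symm
    by_cases hu2 : u = v2
    · subst hu2
      by_cases hv1' : v = v1
      · subst hv1'; rw [hσ2, hσ1, hsym]
      by_cases hv2' : v = u
      · subst hv2'; rw [hdiag, hdiag]
      · rw [hσ2, hσo v hv1' hv2']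
        exact hnbr v hv1' hv2'
    · rw [hσo u hu1 hu2]
      by_cases hv1' : v = v1
      · subst hv1'; rw [hσ1, hsym u v2, ← hnbr u hu1 hu2, hsym]
      by_cases hv2' : v = v2
      · subst hv2'; rw [hσ2, hsym u v1, hnbr u hu1 hu2, hsym]
      · rw [hσo v hv1' hv2']
  have main : ∀ P : V → V, IsTermAssign T P →
      ∃ Q : V → V, IsTermAssign T Q ∧ Q v1 = Q v2 ∧ mtcWeight c Q ≤ mtcWeight c P := by
    intro P hP
    set Q1 : V → V := fun x => if x = v1 then P v2 else P x with hQ1def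
    set Q2 : V → V := fun x => if x = v2 then P v1 else P x with hQ2def
    have hQ1a : IsTermAssign T Q1 := by
      constructor
      · intro x
        simp only [hQ1def]
        split <;> exact hP.1 _
      · intro t ht
        have : t ≠ v1 := fun h => hv1 (h ▸ ht)
        simp only [hQ1def, if_neg this]
        exact hP.2 t ht
    have hQ2a : IsTermAssign T Q2 := by
      constructor
      · intro x
        simp only [hQ2def]
        split <;> exact hP.1 _
      · intro t ht
        have : t ≠ v2 := fun h => hv2 (h ▸ ht)
        simp only [hQ2def, if_neg this]
        exact hP.2 t ht
    have hQ1eq : Q1 v1 = Q1 v2 := by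
      simp only [hQ1def, if_pos rfl, if_neg (Ne.symm h12)]
    have hQ2eq : Q2 v1 = Q2 v2 := by
      simp only [hQ2def, if_pos rfl, if_neg h12]
    -- key pointwise inequality
    have key : ∀ u v : V,
        ((if Q1 u ≠ Q1 v then c u v else 0) + (if Q2 u ≠ Q2 v then c u v else 0))
        ≤ ((if P u ≠ P v then c u v else 0) + (if P (σ u) ≠ P (σ v) then c u v else 0)) := by
      intro u v
      by_cases hu1 : u = v1
      · subst hu1
        by_cases hv1' : v = u
        · subst hv1'
          simp only [hQ1def, hQ2def, hσ1, if_pos rfl, if_neg (Ne.symm h12)]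
          split_ifs <;> first | omega | tauto
        by_cases hv2' : v = v2
        · subst hv2'
          simp only [hQ1def, hQ2def, hσ1, hσ2, if_pos rfl, if_neg h12, if_neg (Ne.symm h12)]
          split_ifs <;> first | omega | tauto
        · simp only [hQ1def, hQ2def, hσ1, hσo v hv1' hv2', if_pos rfl, if_neg (Ne.symm h12),
            if_neg hv1', if_neg hv2']
          split_ifs <;> first | omega | tauto
      by_cases hu2 : u = v2
      · subst hu2
        by_cases hv1' : v = v1
        · subst hv1'
          simp only [hQ1def, hQ2def, hσ1, hσ2, if_pos rfl, if_neg h12, if_neg (Ne.symm h12)]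
          split_ifs <;> first | omega | tauto
        by_cases hv2' : v = u
        · subst hv2'
          simp only [hQ1def, hQ2def, hσ2, if_pos rfl, if_neg h12]
          split_ifs <;> first | omega | tauto
        · simp only [hQ1def, hQ2def, hσ2, hσo v hv1' hv2', if_pos rfl, if_neg h12,
            if_neg hv1', if_neg hv2']
          split_ifs <;> first | omega | tauto
      · by_cases hv1' : v = v1
        · subst hv1'
          simp only [hQ1def, hQ2def, hσ1, hσo u hu1 hu2, if_pos rfl, if_neg (Ne.symm h12),
            if_neg hu1, if_neg hu2]
          split_ifs <;> first | omega | tauto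
        by_cases hv2' : v = v2
        · subst hv2'
          simp only [hQ1def, hQ2def, hσ2, hσo u hu1 hu2, if_pos rfl, if_neg h12,
            if_neg hu1, if_neg hu2]
          split_ifs <;> first | omega | tauto
        · simp only [hQ1def, hQ2def, hσo u hu1 hu2, hσo v hv1' hv2',
            if_neg hu1, if_neg hu2, if_neg hv1', if_neg hv2']
          split_ifs <;> first | omega | tauto
    -- reindexing: the σ-twisted sum equals the original sum
    have hre : (∑ u : V, ∑ v : V, if P (σ u) ≠ P (σ v) then c u v else 0)
        = ∑ u : V, ∑ v : V, if P u ≠ P v then c u v else 0 := by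
      have step1 : (∑ u : V, ∑ v : V, if P (σ u) ≠ P (σ v) then c u v else 0)
          = ∑ u : V, ∑ v : V, if P (σ u) ≠ P (σ v) then c (σ u) (σ v) else 0 :=
        Finset.sum_congr rfl fun u _ => Finset.sum_congr rfl fun v _ => by rw [hc]
      have step2 : (∑ u : V, ∑ v : V, if P (σ u) ≠ P (σ v) then c (σ u) (σ v) else 0)
          = ∑ u : V, ∑ v : V, if P u ≠ P (σ v) then c u (σ v) else 0 :=
        Equiv.sum_comp σ (fun a => ∑ v : V, if P a ≠ P (σ v) then c a (σ v) else 0)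
      have step3 : (∑ u : V, ∑ v : V, if P u ≠ P (σ v) then c u (σ v) else 0)
          = ∑ u : V, ∑ v : V, if P u ≠ P v then c u v else 0 :=
        Finset.sum_congr rfl fun u _ =>
          Equiv.sum_comp σ (fun b => if P u ≠ P b then c u b else 0)
      rw [step1, step2, step3]
    have hFineq' :
        (∑ u : V, ∑ v : V, if Q1 u ≠ Q1 v then c u v else 0)
          + (∑ u : V, ∑ v : V, if Q2 u ≠ Q2 v then c u v else 0)
        ≤ (∑ u : V, ∑ v : V, if P u ≠ P v then c u v else 0)
          + (∑ u : V, ∑ v : V, if P (σ u) ≠ P (σ v) then c u v else 0) := by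
      have h := Finset.sum_le_sum (s := (Finset.univ : Finset V))
        (fun u _ => Finset.sum_le_sum (s := (Finset.univ : Finset V))
          (fun v _ => key u v))
      calc (∑ u : V, ∑ v : V, if Q1 u ≠ Q1 v then c u v else 0)
            + (∑ u : V, ∑ v : V, if Q2 u ≠ Q2 v then c u v else 0)
          = ∑ u : V, ∑ v : V,
              ((if Q1 u ≠ Q1 v then c u v else 0) + (if Q2 u ≠ Q2 v then c u v else 0)) := by
            rw [← Finset.sum_add_distrib]
            exact Finset.sum_congr rfl fun u _ => (Finset.sum_add_distrib).symm
        _ ≤ ∑ u : V, ∑ v : V,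
              ((if P u ≠ P v then c u v else 0) + (if P (σ u) ≠ P (σ v) then c u v else 0)) := h
        _ = (∑ u : V, ∑ v : V, if P u ≠ P v then c u v else 0)
              + (∑ u : V, ∑ v : V, if P (σ u) ≠ P (σ v) then c u v else 0) := by
            rw [← Finset.sum_add_distrib]
            exact Finset.sum_congr rfl fun u _ => Finset.sum_add_distrib
    rw [hre] at hFineq'
    rcases le_total (∑ u : V, ∑ v : V, if Q1 u ≠ Q1 v then c u v else 0)
        (∑ u : V, ∑ v : V, if Q2 u ≠ Q2 v then c u v else 0) with h | h
    · exact ⟨Q1, hQ1a, hQ1eq, Nat.div_le_div_right (by omega)⟩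
    · exact ⟨Q2, hQ2a, hQ2eq, Nat.div_le_div_right (by omega)⟩
  refine ⟨main, ?_⟩
  obtain ⟨t0, ht0⟩ := hT
  have hne : IsTermAssign T (fun x => if x ∈ T then x else t0) := by
    constructor
    · intro x
      by_cases h : x ∈ T <;> simp [h, ht0]
    · intro t ht
      simp [ht]
  have hSne : (mtcWeight c '' {P : V → V | IsTermAssign T P}).Nonempty :=
    ⟨_, ⟨_, hne, rfl⟩⟩
  obtain ⟨P0, hP0, hval⟩ := Nat.sInf_mem hSne
  obtain ⟨Q, hQa, hQeq, hQle⟩ := main P0 hP0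
  refine ⟨Q, ⟨hQa, ?_⟩, hQeq⟩
  intro R hR
  calc mtcWeight c Q ≤ mtcWeight c P0 := hQle
    _ = sInf (mtcWeight c '' {P : V → V | IsTermAssign T P}) := hval
    _ ≤ mtcWeight c R := Nat.sInf_le ⟨R, hR, rfl⟩
end

section
/- Let v be a non-terminal vertex of a weighted graph G with terminal set T, and let (V_v, V∖V_v) be a (largest) minimum isolating cut separating v from all of T, so v ∈ V_v and T ∩ V_v = ∅. Then there exists a minimum multiterminal cut of G in which all vertices of V_v are in the same block. -/
open Finset

variable {V : Type*} [Fintype V] [DecidableEq V]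

lemma sum_split4 (A : Finset V) (f : V → V → ℕ) :
    ∑ u : V, ∑ y : V, f u y =
      ((∑ u ∈ A, ∑ y ∈ A, f u y) + (∑ u ∈ A, ∑ y ∈ Aᶜ, f u y)) +
      ((∑ u ∈ Aᶜ, ∑ y ∈ A, f u y) + (∑ u ∈ Aᶜ, ∑ y ∈ Aᶜ, f u y)) := by
  rw [← Finset.sum_add_sum_compl A (fun u => ∑ y : V, f u y)]
  congr 1 <;> rw [← Finset.sum_add_distrib] <;>
    exact Finset.sum_congr rfl fun u _ => (Finset.sum_add_sum_compl A (f u)).symm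

lemma sum_swap_symm (f : V → V → ℕ) (h : ∀ a b, f a b = f b a) (X Y : Finset V) :
    ∑ u ∈ X, ∑ y ∈ Y, f u y = ∑ u ∈ Y, ∑ y ∈ X, f u y := by
  rw [Finset.sum_comm]
  exact Finset.sum_congr rfl fun y _ => Finset.sum_congr rfl fun u _ => h u y

/-- Let `(V_v, V ∖ V_v)` be the largest minimum isolating cut separating the
non-terminal vertex `v` from all terminals (every minimum isolating cut side is
contained in `V_v`).  Then some minimum multiterminal cut places all vertices of
`V_v` in one block (the block of `v`). -/
theorem stmt11 (c : V → V → ℕ) (hsym : ∀ a b : V, c a b = c b a)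
    (T : Finset V) (hT : T.Nonempty)
    (v : V) (hv : v ∉ T)
    (Vv : Finset V) (hvV : v ∈ Vv) (hTV : ∀ t ∈ T, t ∉ Vv)
    (hmin : ∀ B : Finset V, v ∈ B → (∀ t ∈ T, t ∉ B) →
      cutWeight c Vv ≤ cutWeight c B)
    (hmax : ∀ B : Finset V, v ∈ B → (∀ t ∈ T, t ∉ B) →
      cutWeight c B ≤ cutWeight c Vv → B ⊆ Vv) :
    ∃ P : V → V, IsMinMTC c T P ∧ ∀ x ∈ Vv, P x = P v := by
  classical
  -- obtain a minimum multiterminal assignment Q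
  obtain ⟨t0, ht0⟩ := hT
  have hne : (mtcWeight c '' {P : V → V | IsTermAssign T P}).Nonempty := by
    refine ⟨_, ⟨fun x => if x ∈ T then x else t0, ?_, rfl⟩⟩
    refine ⟨fun x => ?_, fun t ht => by simp [ht]⟩
    by_cases hx : x ∈ T <;> simp [hx, ht0]
  obtain ⟨Q, hQ, hQval⟩ := Nat.sInf_mem hne
  have hQ : IsTermAssign T Q := hQ
  have hQmin : ∀ Q' : V → V, IsTermAssign T Q' → mtcWeight c Q ≤ mtcWeight c Q' := by
    intro Q' hQ'
    rw [hQval]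
    exact Nat.sInf_le ⟨Q', hQ', rfl⟩
  -- the modified assignment P
  set P : V → V := fun x => if x ∈ Vv then Q v else Q x with hPdef
  have hPin : ∀ x ∈ Vv, P x = Q v := fun x hx => if_pos hx
  have hPout : ∀ x, x ∉ Vv → P x = Q x := fun x hx => if_neg hx
  have hPassign : IsTermAssign T P := by
    refine ⟨fun x => ?_, fun t ht => ?_⟩
    · by_cases hx : x ∈ Vv
      · rw [hPin x hx]; exact hQ.1 v
      · rw [hPout x hx]; exact hQ.1 x
    · rw [hPout t (hTV t ht)]; exact hQ.2 t ht
  -- quadrant decomposition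
  have hA1 : ∑ u ∈ Vv, ∑ y ∈ Vv, (if P u ≠ P y then c u y else 0) = 0 := by
    refine Finset.sum_eq_zero fun u hu => Finset.sum_eq_zero fun y hy => ?_
    rw [hPin u hu, hPin y hy]; simp
  have hA2 : ∑ u ∈ Vv, ∑ y ∈ Vvᶜ, (if P u ≠ P y then c u y else 0)
      = (∑ u ∈ Finset.filter (fun u => Q u = Q v) Vv,
           ∑ y ∈ Finset.filter (fun y => ¬ Q y = Q v) Vvᶜ, c u y)
        + (∑ u ∈ Finset.filter (fun u => ¬ Q u = Q v) Vv,
           ∑ y ∈ Finset.filter (fun y => ¬ Q y = Q v) Vvᶜ, c u y) := by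
    have hinner : ∀ u ∈ Vv, ∑ y ∈ Vvᶜ, (if P u ≠ P y then c u y else 0)
        = ∑ y ∈ Finset.filter (fun y => ¬ Q y = Q v) Vvᶜ, c u y := by
      intro u hu
      rw [Finset.sum_filter]
      refine Finset.sum_congr rfl fun y hy => ?_
      rw [hPin u hu, hPout y (Finset.mem_compl.mp hy)]
      by_cases h : Q y = Q v
      · simp [h]
      · simp [h, Ne.symm h]
    rw [Finset.sum_congr rfl hinner,
      ← Finset.sum_filter_add_sum_filter_not Vv (fun u => Q u = Q v)
        (fun u => ∑ y ∈ Finset.filter (fun y => ¬ Q y = Q v) Vvᶜ, c u y)]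
  have hPsymm : ∀ a b : V, (if P a ≠ P b then c a b else 0) = (if P b ≠ P a then c b a else 0) :=
    fun a b => by rw [hsym]; exact if_congr ne_comm rfl rfl
  have hQsymm : ∀ a b : V, (if Q a ≠ Q b then c a b else 0) = (if Q b ≠ Q a then c b a else 0) :=
    fun a b => by rw [hsym]; exact if_congr ne_comm rfl rfl
  have hA3 : ∑ u ∈ Vvᶜ, ∑ y ∈ Vv, (if P u ≠ P y then c u y else 0)
      = ∑ u ∈ Vv, ∑ y ∈ Vvᶜ, (if P u ≠ P y then c u y else 0) :=
    sum_swap_symm _ hPsymm _ _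
  have hA4 : ∑ u ∈ Vvᶜ, ∑ y ∈ Vvᶜ, (if P u ≠ P y then c u y else 0)
      = ∑ u ∈ Vvᶜ, ∑ y ∈ Vvᶜ, (if Q u ≠ Q y then c u y else 0) := by
    refine Finset.sum_congr rfl fun u hu => Finset.sum_congr rfl fun y hy => ?_
    rw [hPout u (Finset.mem_compl.mp hu), hPout y (Finset.mem_compl.mp hy)]
  -- lower bounds on the Q-quadrants
  have hB1 : (∑ u ∈ Finset.filter (fun u => Q u = Q v) Vv,
                ∑ y ∈ Finset.filter (fun u => ¬ Q u = Q v) Vv, c u y)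
        + (∑ u ∈ Finset.filter (fun u => ¬ Q u = Q v) Vv,
                ∑ y ∈ Finset.filter (fun u => Q u = Q v) Vv, c u y)
      ≤ ∑ u ∈ Vv, ∑ y ∈ Vv, (if Q u ≠ Q y then c u y else 0) := by
    rw [← Finset.sum_filter_add_sum_filter_not Vv (fun u => Q u = Q v)
      (fun u => ∑ y ∈ Vv, (if Q u ≠ Q y then c u y else 0))]
    refine Nat.add_le_add ?_ ?_
    · refine Finset.sum_le_sum fun u hu => ?_
      have hu' := (Finset.mem_filter.mp hu).2
      calc ∑ y ∈ Finset.filter (fun u => ¬ Q u = Q v) Vv, c u y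
          = ∑ y ∈ Finset.filter (fun u => ¬ Q u = Q v) Vv, (if Q u ≠ Q y then c u y else 0) := by
            refine Finset.sum_congr rfl fun y hy => ?_
            have hy' := (Finset.mem_filter.mp hy).2
            rw [if_pos (by rw [hu']; exact fun h => hy' h.symm)]
        _ ≤ ∑ y ∈ Vv, (if Q u ≠ Q y then c u y else 0) :=
            Finset.sum_le_sum_of_subset (Finset.filter_subset _ _)
    · refine Finset.sum_le_sum fun u hu => ?_
      have hu' := (Finset.mem_filter.mp hu).2
      calc ∑ y ∈ Finset.filter (fun u => Q u = Q v) Vv, c u y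
          = ∑ y ∈ Finset.filter (fun u => Q u = Q v) Vv, (if Q u ≠ Q y then c u y else 0) := by
            refine Finset.sum_congr rfl fun y hy => ?_
            have hy' := (Finset.mem_filter.mp hy).2
            rw [if_pos (fun h => hu' (h.trans hy'))]
        _ ≤ ∑ y ∈ Vv, (if Q u ≠ Q y then c u y else 0) :=
            Finset.sum_le_sum_of_subset (Finset.filter_subset _ _)
  have hB2 : (∑ u ∈ Finset.filter (fun u => Q u = Q v) Vv,
                ∑ y ∈ Finset.filter (fun y => ¬ Q y = Q v) Vvᶜ, c u y)
        + (∑ u ∈ Finset.filter (fun u => ¬ Q u = Q v) Vv,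
                ∑ y ∈ Finset.filter (fun y => Q y = Q v) Vvᶜ, c u y)
      ≤ ∑ u ∈ Vv, ∑ y ∈ Vvᶜ, (if Q u ≠ Q y then c u y else 0) := by
    rw [← Finset.sum_filter_add_sum_filter_not Vv (fun u => Q u = Q v)
      (fun u => ∑ y ∈ Vvᶜ, (if Q u ≠ Q y then c u y else 0))]
    refine Nat.add_le_add ?_ ?_
    · refine Finset.sum_le_sum fun u hu => ?_
      have hu' := (Finset.mem_filter.mp hu).2
      calc ∑ y ∈ Finset.filter (fun y => ¬ Q y = Q v) Vvᶜ, c u y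
          = ∑ y ∈ Finset.filter (fun y => ¬ Q y = Q v) Vvᶜ, (if Q u ≠ Q y then c u y else 0) := by
            refine Finset.sum_congr rfl fun y hy => ?_
            have hy' := (Finset.mem_filter.mp hy).2
            rw [if_pos (by rw [hu']; exact fun h => hy' h.symm)]
        _ ≤ ∑ y ∈ Vvᶜ, (if Q u ≠ Q y then c u y else 0) :=
            Finset.sum_le_sum_of_subset (Finset.filter_subset _ _)
    · refine Finset.sum_le_sum fun u hu => ?_
      have hu' := (Finset.mem_filter.mp hu).2
      calc ∑ y ∈ Finset.filter (fun y => Q y = Q v) Vvᶜ, c u y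
          = ∑ y ∈ Finset.filter (fun y => Q y = Q v) Vvᶜ, (if Q u ≠ Q y then c u y else 0) := by
            refine Finset.sum_congr rfl fun y hy => ?_
            have hy' := (Finset.mem_filter.mp hy).2
            rw [if_pos (fun h => hu' (h.trans hy'))]
        _ ≤ ∑ y ∈ Vvᶜ, (if Q u ≠ Q y then c u y else 0) :=
            Finset.sum_le_sum_of_subset (Finset.filter_subset _ _)
  have hB3 : ∑ u ∈ Vvᶜ, ∑ y ∈ Vv, (if Q u ≠ Q y then c u y else 0)
      = ∑ u ∈ Vv, ∑ y ∈ Vvᶜ, (if Q u ≠ Q y then c u y else 0) :=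
    sum_swap_symm _ hQsymm _ _
  have hRS : (∑ u ∈ Finset.filter (fun u => ¬ Q u = Q v) Vv,
                ∑ y ∈ Finset.filter (fun u => Q u = Q v) Vv, c u y)
      = ∑ u ∈ Finset.filter (fun u => Q u = Q v) Vv,
                ∑ y ∈ Finset.filter (fun u => ¬ Q u = Q v) Vv, c u y :=
    sum_swap_symm c hsym _ _
  -- the isolating-cut minimality applied to S
  have hSv : v ∈ Finset.filter (fun u => Q u = Q v) Vv := Finset.mem_filter.mpr ⟨hvV, rfl⟩
  have hST : ∀ t ∈ T, t ∉ Finset.filter (fun u => Q u = Q v) Vv :=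
    fun t ht hts => hTV t ht (Finset.mem_filter.mp hts).1
  have hcut := hmin _ hSv hST
  have e1 : cutWeight c Vv
      = ((∑ u ∈ Finset.filter (fun u => Q u = Q v) Vv,
            ∑ y ∈ Finset.filter (fun y => Q y = Q v) Vvᶜ, c u y)
        + (∑ u ∈ Finset.filter (fun u => Q u = Q v) Vv,
            ∑ y ∈ Finset.filter (fun y => ¬ Q y = Q v) Vvᶜ, c u y))
        + ((∑ u ∈ Finset.filter (fun u => ¬ Q u = Q v) Vv,
            ∑ y ∈ Finset.filter (fun y => Q y = Q v) Vvᶜ, c u y)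
        + (∑ u ∈ Finset.filter (fun u => ¬ Q u = Q v) Vv,
            ∑ y ∈ Finset.filter (fun y => ¬ Q y = Q v) Vvᶜ, c u y)) := by
    have hstep : cutWeight c Vv
        = (∑ u ∈ Finset.filter (fun u => Q u = Q v) Vv, ∑ y ∈ Vvᶜ, c u y)
        + ∑ u ∈ Finset.filter (fun u => ¬ Q u = Q v) Vv, ∑ y ∈ Vvᶜ, c u y :=
      (Finset.sum_filter_add_sum_filter_not Vv (fun u => Q u = Q v)
        (fun u => ∑ y ∈ Vvᶜ, c u y)).symm
    rw [hstep]
    congr 1 <;> rw [← Finset.sum_add_distrib] <;>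
      exact Finset.sum_congr rfl fun u _ =>
        (Finset.sum_filter_add_sum_filter_not Vvᶜ (fun y => Q y = Q v) (c u)).symm
  have e2 : cutWeight c (Finset.filter (fun u => Q u = Q v) Vv)
      = (∑ u ∈ Finset.filter (fun u => Q u = Q v) Vv,
            ∑ y ∈ Finset.filter (fun u => ¬ Q u = Q v) Vv, c u y)
        + ((∑ u ∈ Finset.filter (fun u => Q u = Q v) Vv,
            ∑ y ∈ Finset.filter (fun y => Q y = Q v) Vvᶜ, c u y)
        + (∑ u ∈ Finset.filter (fun u => Q u = Q v) Vv,
            ∑ y ∈ Finset.filter (fun y => ¬ Q y = Q v) Vvᶜ, c u y)) := by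
    have hScomp : (Finset.filter (fun u => Q u = Q v) Vv)ᶜ
        = Finset.filter (fun u => ¬ Q u = Q v) Vv ∪ Vvᶜ := by
      ext x
      simp only [Finset.mem_compl, Finset.mem_filter, Finset.mem_union]
      tauto
    have hdisj : Disjoint (Finset.filter (fun u => ¬ Q u = Q v) Vv) Vvᶜ :=
      (disjoint_compl_right : Disjoint Vv Vvᶜ).mono_left (Finset.filter_subset _ _)
    have hstep : ∀ u : V, ∑ y ∈ (Finset.filter (fun u => Q u = Q v) Vv)ᶜ, c u y
        = (∑ y ∈ Finset.filter (fun u => ¬ Q u = Q v) Vv, c u y)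
          + ((∑ y ∈ Finset.filter (fun y => Q y = Q v) Vvᶜ, c u y)
          + (∑ y ∈ Finset.filter (fun y => ¬ Q y = Q v) Vvᶜ, c u y)) := by
      intro u
      rw [hScomp, Finset.sum_union hdisj,
        ← Finset.sum_filter_add_sum_filter_not Vvᶜ (fun y => Q y = Q v) (c u)]
    show ∑ u ∈ Finset.filter (fun u => Q u = Q v) Vv,
        ∑ y ∈ (Finset.filter (fun u => Q u = Q v) Vv)ᶜ, c u y = _
    rw [Finset.sum_congr rfl fun u _ => hstep u]
    rw [Finset.sum_add_distrib, Finset.sum_add_distrib]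
  -- the key comparison
  have key : mtcWeight c P ≤ mtcWeight c Q := by
    have hsum : ∑ u : V, ∑ y : V, (if P u ≠ P y then c u y else 0)
        ≤ ∑ u : V, ∑ y : V, (if Q u ≠ Q y then c u y else 0) := by
      rw [sum_split4 Vv (fun u y => if P u ≠ P y then c u y else 0),
        sum_split4 Vv (fun u y => if Q u ≠ Q y then c u y else 0)]
      omega
    exact Nat.div_le_div_right hsum
  refine ⟨P, ⟨hPassign, fun Q' hQ' => le_trans key (hQmin Q' hQ')⟩, fun x hx => ?_⟩
  rw [hPin x hx, hPin v hvV]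
end

section
/- For a weighted graph G with terminal set T = {t₁,…,t_k}, k ≥ 2, the union of any k−1 of the k minimum isolating cuts is a valid multiterminal cut; consequently W(G) ≤ Σ_{i=1}^{k} λ(G, t_i, T∖{t_i}) − max_i λ(G, t_i, T∖{t_i}). -/
open Finset

variable {V : Type*} [Fintype V] [DecidableEq V]

/-- The minimum weight λ(G, t, T∖{t}) of a cut isolating the terminal `t` from all
other terminals of `T`. -/
noncomputable def isoVal (c : V → V → ℕ) (T : Finset V) (t : V) : ℕ :=
  sInf (cutWeight c '' {A : Finset V | t ∈ A ∧ ∀ s ∈ T, s ≠ t → s ∉ A})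

lemma cutWeight_eq_sum_ite (c : V → V → ℕ) (A : Finset V) :
    cutWeight c A = ∑ u : V, ∑ v : V, if u ∈ A ∧ v ∉ A then c u v else 0 := by
  classical
  unfold cutWeight
  have h1 : ∀ u : V, ∑ v ∈ Aᶜ, c u v = ∑ v : V, if v ∉ A then c u v else 0 := by
    intro u
    rw [show (Aᶜ : Finset V) = univ.filter (fun v => v ∉ A) from by ext; simp,
      Finset.sum_filter]
  calc ∑ u ∈ A, ∑ v ∈ Aᶜ, c u v
      = ∑ u ∈ A, ∑ v : V, if v ∉ A then c u v else 0 :=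
        Finset.sum_congr rfl fun u _ => h1 u
    _ = ∑ u : V, if u ∈ A then (∑ v : V, if v ∉ A then c u v else 0) else 0 := by
        conv_lhs => rw [show (A : Finset V) = univ.filter (fun u => u ∈ A) from by ext; simp]
        rw [Finset.sum_filter]
        simp
    _ = ∑ u : V, ∑ v : V, if u ∈ A ∧ v ∉ A then c u v else 0 := by
        apply Finset.sum_congr rfl; intro u _
        by_cases hu : u ∈ A <;> simp [hu]

lemma key_lemma (c : V → V → ℕ) (hsym : ∀ a b : V, c a b = c b a)
    (T : Finset V) (t0 : V) (ht0 : t0 ∈ T) :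
    ∃ P : V → V, IsTermAssign T P ∧
      mtcWeight c P ≤ ∑ t ∈ T.erase t0, isoVal c T t := by
  classical
  have hex : ∀ t : V, ∃ A : Finset V,
      (t ∈ A ∧ ∀ s ∈ T, s ≠ t → s ∉ A) ∧ cutWeight c A = isoVal c T t := by
    intro t
    have hne : (cutWeight c '' {A : Finset V | t ∈ A ∧ ∀ s ∈ T, s ≠ t → s ∉ A}).Nonempty := by
      refine ⟨cutWeight c {t}, ⟨{t}, ⟨Finset.mem_singleton_self t, ?_⟩, rfl⟩⟩
      intro s _ hs
      simp [hs]
    obtain ⟨A, h1, h2⟩ := Nat.sInf_mem hne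
    exact ⟨A, h1, h2⟩
  choose A hAmem hAval using hex
  letI : LinearOrder V := LinearOrder.lift' (Fintype.equivFin V) (Fintype.equivFin V).injective
  set S : V → Finset V := fun x => (T.erase t0).filter (fun t => x ∈ A t) with hSdef
  set P : V → V := fun x => if h : (S x).Nonempty then (S x).min' h else t0 with hPdef
  have hSsub : ∀ x, ∀ t ∈ S x, t ∈ T.erase t0 ∧ x ∈ A t := by
    intro x t ht
    exact Finset.mem_filter.mp ht
  have hPmem : ∀ x, P x ∈ T := by
    intro x
    rw [hPdef]
    by_cases h : (S x).Nonempty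
    · simp only [dif_pos h]
      exact Finset.mem_of_mem_erase ((hSsub x _ ((S x).min'_mem h)).1)
    · simp only [dif_neg h]
      exact ht0
  have hPfix : ∀ t ∈ T, P t = t := by
    intro t ht
    by_cases h0 : t = t0
    · subst h0
      have : S t = ∅ := by
        apply Finset.eq_empty_of_forall_notMem
        intro s hs
        obtain ⟨hs1, hs2⟩ := hSsub t s hs
        exact (hAmem s).2 t ht (Finset.ne_of_mem_erase hs1).symm hs2
      rw [hPdef]
      simp [this]
    · have hSt : S t = {t} := by
        ext s
        simp only [hSdef, Finset.mem_filter, Finset.mem_singleton]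
        constructor
        · rintro ⟨hs1, hs2⟩
          by_contra hne
          exact (hAmem s).2 t ht (fun h => hne h.symm) hs2
        · rintro rfl
          exact ⟨Finset.mem_erase.mpr ⟨h0, ht⟩, (hAmem s).1⟩
      rw [hPdef]
      simp [hSt]
  refine ⟨P, ⟨hPmem, hPfix⟩, ?_⟩
  -- crossing lemma
  have cross : ∀ u v : V, P u ≠ P v →
      ∃ t ∈ T.erase t0, (u ∈ A t ∧ v ∉ A t) ∨ (v ∈ A t ∧ u ∉ A t) := by
    intro u v huv
    by_cases hu : (S u).Nonempty <;> by_cases hv : (S v).Nonempty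
    · have hPu : P u = (S u).min' hu := by rw [hPdef]; simp [hu]
      have hPv : P v = (S v).min' hv := by rw [hPdef]; simp [hv]
      have hab : (S u).min' hu ≠ (S v).min' hv := by
        rw [hPu, hPv] at huv; exact huv
      rcases lt_or_gt_of_ne hab with h | h
      · refine ⟨(S u).min' hu, (hSsub u _ ((S u).min'_mem hu)).1,
          Or.inl ⟨(hSsub u _ ((S u).min'_mem hu)).2, ?_⟩⟩
        intro hvA
        have hmem : (S u).min' hu ∈ S v :=
          Finset.mem_filter.mpr ⟨(hSsub u _ ((S u).min'_mem hu)).1, hvA⟩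
        exact absurd ((S v).min'_le _ hmem) (not_le.mpr h)
      · refine ⟨(S v).min' hv, (hSsub v _ ((S v).min'_mem hv)).1,
          Or.inr ⟨(hSsub v _ ((S v).min'_mem hv)).2, ?_⟩⟩
        intro huA
        have hmem : (S v).min' hv ∈ S u :=
          Finset.mem_filter.mpr ⟨(hSsub v _ ((S v).min'_mem hv)).1, huA⟩
        exact absurd ((S u).min'_le _ hmem) (not_le.mpr h)
    · refine ⟨(S u).min' hu, (hSsub u _ ((S u).min'_mem hu)).1,
        Or.inl ⟨(hSsub u _ ((S u).min'_mem hu)).2, ?_⟩⟩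
      intro hvA
      exact hv ⟨_, Finset.mem_filter.mpr ⟨(hSsub u _ ((S u).min'_mem hu)).1, hvA⟩⟩
    · refine ⟨(S v).min' hv, (hSsub v _ ((S v).min'_mem hv)).1,
        Or.inr ⟨(hSsub v _ ((S v).min'_mem hv)).2, ?_⟩⟩
      intro huA
      exact hu ⟨_, Finset.mem_filter.mpr ⟨(hSsub v _ ((S v).min'_mem hv)).1, huA⟩⟩
    · exfalso
      apply huv
      rw [hPdef]
      simp [hu, hv]
  -- main numeric bound
  have hnum : (∑ u : V, ∑ v : V, if P u ≠ P v then c u v else 0)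
      ≤ 2 * ∑ t ∈ T.erase t0, cutWeight c (A t) := by
    have hpt : ∀ u v : V, (if P u ≠ P v then c u v else 0)
        ≤ ∑ t ∈ T.erase t0, ((if u ∈ A t ∧ v ∉ A t then c u v else 0)
            + (if v ∈ A t ∧ u ∉ A t then c u v else 0)) := by
      intro u v
      by_cases huv : P u = P v
      · simp [huv]
      · rw [if_pos huv]
        obtain ⟨t, ht, hc⟩ := cross u v huv
        calc c u v ≤ (if u ∈ A t ∧ v ∉ A t then c u v else 0)
            + (if v ∈ A t ∧ u ∉ A t then c u v else 0) := by
              rcases hc with h | h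
              · rw [if_pos h]; omega
              · rw [if_pos h]; omega
          _ ≤ _ := Finset.single_le_sum
              (f := fun t => (if u ∈ A t ∧ v ∉ A t then c u v else 0)
                + (if v ∈ A t ∧ u ∉ A t then c u v else 0))
              (fun i _ => Nat.zero_le _) ht
    calc (∑ u : V, ∑ v : V, if P u ≠ P v then c u v else 0)
        ≤ ∑ u : V, ∑ v : V, ∑ t ∈ T.erase t0,
            ((if u ∈ A t ∧ v ∉ A t then c u v else 0)
              + (if v ∈ A t ∧ u ∉ A t then c u v else 0)) := by
          apply Finset.sum_le_sum; intro u _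
          apply Finset.sum_le_sum; intro v _
          exact hpt u v
      _ = ∑ t ∈ T.erase t0, ((∑ u : V, ∑ v : V, if u ∈ A t ∧ v ∉ A t then c u v else 0)
            + (∑ u : V, ∑ v : V, if v ∈ A t ∧ u ∉ A t then c u v else 0)) := by
          rw [Finset.sum_congr rfl fun u _ => Finset.sum_comm (γ := V)]
          rw [Finset.sum_comm]
          apply Finset.sum_congr rfl; intro t _
          rw [← Finset.sum_add_distrib]
          apply Finset.sum_congr rfl; intro u _
          rw [← Finset.sum_add_distrib]
      _ = 2 * ∑ t ∈ T.erase t0, cutWeight c (A t) := by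
          rw [Finset.mul_sum]
          apply Finset.sum_congr rfl
          intro t _
          have h2 : (∑ u : V, ∑ v : V, if v ∈ A t ∧ u ∉ A t then c u v else 0)
              = cutWeight c (A t) := by
            rw [Finset.sum_comm]
            rw [cutWeight_eq_sum_ite]
            apply Finset.sum_congr rfl; intro u _
            apply Finset.sum_congr rfl; intro v _
            rw [hsym]
          rw [← cutWeight_eq_sum_ite, h2]
          omega
  have : mtcWeight c P ≤ ∑ t ∈ T.erase t0, cutWeight c (A t) := by
    unfold mtcWeight
    calc (∑ u : V, ∑ v : V, if P u ≠ P v then c u v else 0) / 2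
        ≤ (2 * ∑ t ∈ T.erase t0, cutWeight c (A t)) / 2 := Nat.div_le_div_right hnum
      _ = ∑ t ∈ T.erase t0, cutWeight c (A t) := by omega
  calc mtcWeight c P ≤ ∑ t ∈ T.erase t0, cutWeight c (A t) := this
    _ = ∑ t ∈ T.erase t0, isoVal c T t := Finset.sum_congr rfl (fun t _ => hAval t)

/-- Upper bound of Dahlhaus et al.: the union of any `k−1` of the `k` minimum
isolating cuts is a valid multiterminal cut, hence
`W(G) ≤ Σ_{t ∈ T} λ(G, t, T∖{t}) − max_{t ∈ T} λ(G, t, T∖{t})`. -/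
theorem stmt15 (c : V → V → ℕ) (hsym : ∀ a b : V, c a b = c b a)
    (hdiag : ∀ a : V, c a a = 0)
    (T : Finset V) (hT : 2 ≤ T.card) :
    (∀ t0 ∈ T, ∃ P : V → V, IsTermAssign T P ∧
      mtcWeight c P ≤ ∑ t ∈ T.erase t0, isoVal c T t) ∧
    mtcVal c T ≤ ∑ t ∈ T, isoVal c T t - T.sup (fun t => isoVal c T t) := by
  have hne : T.Nonempty := Finset.card_pos.mp (by omega)
  obtain ⟨t1, ht1, hsup⟩ := Finset.exists_mem_eq_sup T hne (fun t => isoVal c T t)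
  refine ⟨fun t0 ht0 => key_lemma c hsym T t0 ht0, ?_⟩
  obtain ⟨P, hP, hle⟩ := key_lemma c hsym T t1 ht1
  have h1 : mtcVal c T ≤ mtcWeight c P := Nat.sInf_le ⟨P, hP, rfl⟩
  have h2 : isoVal c T t1 + ∑ t ∈ T.erase t1, isoVal c T t = ∑ t ∈ T, isoVal c T t :=
    Finset.add_sum_erase T _ ht1
  rw [hsup]
  omega
end

section
/- Let G_R be the quotient graph of G obtained by contracting each block of a minimum multiterminal cut into a single vertex. In G_R, for any minimum cut S separating two vertices u and v, every vertex w other than u and v has at most half of its weighted degree in S; consequently 2·c(S) ≤ (Σ_{w} deg(w))/2 + deg(u)/2 + deg(v)/2 where the sum is over all vertices of G_R. -/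
open Finset

variable {V : Type*} [Fintype V] [DecidableEq V]

/-- In the quotient graph `G_R` of a minimum multiterminal cut, let `A` be (the
`u`-side of) a minimum cut `S` separating the distinguished vertices `u` and `v`.
Then every other vertex `w` has at most half of its weighted degree in `S`, and
consequently `2·c(S) ≤ (Σ_w deg(w))/2 + deg(u)/2 + deg(v)/2` (stated multiplied by
two to avoid fractions: `4·c(S) ≤ Σ_w deg(w) + deg(u) + deg(v)`). -/
theorem stmt16 (c : V → V → ℕ) (hsym : ∀ a b : V, c a b = c b a)
    (hdiag : ∀ a : V, c a a = 0)
    (u v : V) (huv : u ≠ v)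
    (A : Finset V) (hu : u ∈ A) (hv : v ∉ A)
    (hmin : ∀ B : Finset V, u ∈ B → v ∉ B → cutWeight c A ≤ cutWeight c B) :
    (∀ w : V, w ≠ u → w ≠ v →
      2 * (∑ b ∈ (if w ∈ A then Aᶜ else A), c w b) ≤ ∑ b : V, c w b) ∧
    4 * cutWeight c A ≤ (∑ w : V, ∑ b : V, c w b) + (∑ b : V, c u b) + (∑ b : V, c v b) := by
  have hsplit : ∀ w : V, (∑ b : V, c w b) = (∑ b ∈ A, c w b) + ∑ b ∈ Aᶜ, c w b := by
    intro w; rw [Finset.sum_add_sum_compl]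
  have part1 : ∀ w : V, w ≠ u → w ≠ v →
      2 * (∑ b ∈ (if w ∈ A then Aᶜ else A), c w b) ≤ ∑ b : V, c w b := by
    intro w hwu hwv
    by_cases hw : w ∈ A
    · simp only [hw, if_true]
      have hB := hmin (A.erase w) (Finset.mem_erase.mpr ⟨hwu.symm, hu⟩)
        (fun h => hv (Finset.mem_of_mem_erase h))
      have hcompl : (A.erase w)ᶜ = insert w Aᶜ := by
        ext x
        simp only [Finset.mem_compl, Finset.mem_erase, Finset.mem_insert]
        tauto
      have hwA : w ∉ Aᶜ := by simpa using hw
      have hBval : cutWeight c (A.erase w)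
          = ∑ a ∈ A.erase w, (c a w + ∑ b ∈ Aᶜ, c a b) := by
        unfold cutWeight
        rw [hcompl]
        exact Finset.sum_congr rfl fun a _ => Finset.sum_insert hwA
      have hAval : cutWeight c A
          = (∑ b ∈ Aᶜ, c w b) + ∑ a ∈ A.erase w, ∑ b ∈ Aᶜ, c a b := by
        unfold cutWeight
        rw [← Finset.add_sum_erase A _ hw]
      rw [hAval, hBval, Finset.sum_add_distrib] at hB
      have key : (∑ b ∈ Aᶜ, c w b) ≤ ∑ a ∈ A.erase w, c a w := by omega
      have hA2 : (∑ b ∈ A, c w b) = ∑ a ∈ A.erase w, c a w := by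
        rw [← Finset.add_sum_erase A _ hw, hdiag, zero_add]
        exact Finset.sum_congr rfl fun a _ => hsym w a
      rw [hsplit w, hA2]
      omega
    · simp only [hw, if_false]
      have hB := hmin (insert w A) (Finset.mem_insert_of_mem hu)
        (fun h => (Finset.mem_insert.mp h).elim (fun h' => hwv h'.symm) hv)
      have hwA : w ∈ Aᶜ := by simpa using hw
      have hcompl : (insert w A)ᶜ = Aᶜ.erase w := by
        ext x
        simp only [Finset.mem_compl, Finset.mem_erase, Finset.mem_insert]
        tauto
      have hBval : cutWeight c (insert w A)
          = (∑ b ∈ Aᶜ.erase w, c w b) + ∑ a ∈ A, ∑ b ∈ Aᶜ.erase w, c a b := by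
        unfold cutWeight
        rw [hcompl, Finset.sum_insert hw]
      have hAval : cutWeight c A
          = ∑ a ∈ A, (c a w + ∑ b ∈ Aᶜ.erase w, c a b) := by
        unfold cutWeight
        exact Finset.sum_congr rfl fun a _ => (Finset.add_sum_erase Aᶜ _ hwA).symm
      rw [hAval, hBval, Finset.sum_add_distrib] at hB
      have key : (∑ a ∈ A, c a w) ≤ ∑ b ∈ Aᶜ.erase w, c w b := by omega
      have hC2 : (∑ b ∈ Aᶜ, c w b) = c w w + ∑ b ∈ Aᶜ.erase w, c w b := by
        rw [Finset.add_sum_erase Aᶜ _ hwA]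
      have hA2 : (∑ b ∈ A, c w b) = ∑ a ∈ A, c a w :=
        Finset.sum_congr rfl fun a _ => hsym w a
      rw [hsplit w, hA2]
      rw [hdiag] at hC2
      omega
  refine ⟨part1, ?_⟩
  have hcut2 : (∑ w : V, ∑ b ∈ (if w ∈ A then Aᶜ else A), c w b) = 2 * cutWeight c A := by
    rw [← Finset.sum_add_sum_compl A]
    have h1 : (∑ w ∈ A, ∑ b ∈ (if w ∈ A then Aᶜ else A), c w b) = cutWeight c A :=
      Finset.sum_congr rfl fun w hw => by rw [if_pos hw]
    have h2 : (∑ w ∈ Aᶜ, ∑ b ∈ (if w ∈ A then Aᶜ else A), c w b) = cutWeight c A := by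
      rw [Finset.sum_congr rfl fun w hw => by
        simp only [Finset.mem_compl.mp hw, if_false]
        rfl]
      unfold cutWeight
      rw [Finset.sum_comm]
      exact Finset.sum_congr rfl fun a _ => Finset.sum_congr rfl fun b _ => hsym b a
    rw [h1, h2]; ring
  have hbound : ∀ w : V, 2 * (∑ b ∈ (if w ∈ A then Aᶜ else A), c w b) ≤
      (∑ b : V, c w b) + (if w = u then ∑ b : V, c u b else 0)
        + (if w = v then ∑ b : V, c v b else 0) := by
    intro w
    by_cases hwu : w = u
    · subst hwu
      have : (∑ b ∈ (if w ∈ A then Aᶜ else A), c w b) ≤ ∑ b : V, c w b :=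
        Finset.sum_le_sum_of_subset (Finset.subset_univ _)
      rw [if_pos rfl, if_neg huv]
      omega
    · by_cases hwv : w = v
      · subst hwv
        have : (∑ b ∈ (if w ∈ A then Aᶜ else A), c w b) ≤ ∑ b : V, c w b :=
          Finset.sum_le_sum_of_subset (Finset.subset_univ _)
        rw [if_pos rfl, if_neg hwu]
        omega
      · have := part1 w hwu hwv
        simp only [if_neg hwu, if_neg hwv]
        omega
  calc 4 * cutWeight c A = ∑ w : V, 2 * (∑ b ∈ (if w ∈ A then Aᶜ else A), c w b) := by
        rw [← Finset.mul_sum, hcut2]; ring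
    _ ≤ ∑ w : V, ((∑ b : V, c w b) + (if w = u then ∑ b : V, c u b else 0)
        + (if w = v then ∑ b : V, c v b else 0)) := Finset.sum_le_sum fun w _ => hbound w
    _ = (∑ w : V, ∑ b : V, c w b) + (∑ b : V, c u b) + (∑ b : V, c v b) := by
        rw [Finset.sum_add_distrib, Finset.sum_add_distrib, Finset.sum_ite_eq' Finset.univ u,
          Finset.sum_ite_eq' Finset.univ v]
        simp
end
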